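/- arXiv:1503.06249 — 3 statements merged into one kernel-verified Lean document; each statement's English description precedes it below -/
import Mathlib

section
/- (Lipschitz invariance) Let E ⊆ ℝ^d and f : E → ℝ^p be Lipschitz and satisfy liminf_{x ∈ E, |x| → ∞} |f(x)|/|x| > 0. Then Dim_H f(E) ≤ Dim_H E. -/
open MeasureTheory Real Set

noncomputable section

/-- The upright box with southwest corner `x` and sidelength `r`. -/
def uprightBox (d : ℕ) (x : Fin d → ℝ) (r : ℝ) : Set (Fin d → ℝ) :=
  {y | ∀ i, y i ∈ Set.Ico (x i) (x i + r)}

/-- The box `[-e^n, e^n)^d`. -/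
def macroBall (d n : ℕ) : Set (Fin d → ℝ) :=
  {y | ∀ i, y i ∈ Set.Ico (-(Real.exp n)) (Real.exp n)}

/-- The `n`-th exponential shell. -/
def shell (d : ℕ) : ℕ → Set (Fin d → ℝ)
  | 0 => macroBall d 0
  | n + 1 => macroBall d (n + 1) \ macroBall d n

/-- The Barlow–Taylor content `ν^n_ρ(E)`: infimum of `Σ (side(Q_i)/e^n)^ρ` over finite
covers of `E ∩ S_n` by upright boxes of sidelength at least 1. -/
def nuN (d : ℕ) (ρ : ℝ) (n : ℕ) (E : Set (Fin d → ℝ)) : ℝ :=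
  sInf { s : ℝ | ∃ (m : ℕ) (c : Fin m → Fin d → ℝ) (r : Fin m → ℝ),
    (∀ i, 1 ≤ r i) ∧ (E ∩ shell d n ⊆ ⋃ i, uprightBox d (c i) (r i)) ∧
    s = ∑ i, (r i / Real.exp n) ^ ρ }

/-- The macroscopic (Barlow–Taylor) Hausdorff dimension. -/
def DimH (d : ℕ) (E : Set (Fin d → ℝ)) : ℝ :=
  sInf { ρ : ℝ | 0 < ρ ∧ Summable (fun n => nuN d ρ n E) }

end

namespace MacroAux

/-- The defining set of `nuN`. -/
def nuSet (d : ℕ) (ρ : ℝ) (n : ℕ) (E : Set (Fin d → ℝ)) : Set ℝ :=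
  { s : ℝ | ∃ (m : ℕ) (c : Fin m → Fin d → ℝ) (r : Fin m → ℝ),
    (∀ i, 1 ≤ r i) ∧ (E ∩ shell d n ⊆ ⋃ i, uprightBox d (c i) (r i)) ∧
    s = ∑ i, (r i / Real.exp n) ^ ρ }

lemma nuN_eq (d : ℕ) (ρ : ℝ) (n : ℕ) (E : Set (Fin d → ℝ)) :
    nuN d ρ n E = sInf (nuSet d ρ n E) := rfl

lemma nuSet_nonneg {d : ℕ} {ρ : ℝ} {n : ℕ} {E : Set (Fin d → ℝ)} :
    ∀ s ∈ nuSet d ρ n E, (0:ℝ) ≤ s := by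
  rintro s ⟨m, c, r, hr, -, rfl⟩
  apply Finset.sum_nonneg
  intro i _
  exact Real.rpow_nonneg (div_nonneg (by linarith [hr i]) (Real.exp_pos _).le) _

lemma shell_subset_macroBall (d : ℕ) : ∀ k, shell d k ⊆ macroBall d k
  | 0 => subset_rfl
  | (k+1) => diff_subset

lemma macroBall_mono {d : ℕ} {m n : ℕ} (h : m ≤ n) : macroBall d m ⊆ macroBall d n := by
  intro x hx i
  obtain ⟨h1, h2⟩ := hx i
  have : Real.exp m ≤ Real.exp n := Real.exp_le_exp.2 (by exact_mod_cast h)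
  exact ⟨by linarith, by linarith⟩

lemma exists_shell {d : ℕ} {M : ℕ} {x : Fin d → ℝ} (hx : x ∈ macroBall d M) :
    ∃ k ≤ M, x ∈ shell d k := by
  induction M with
  | zero => exact ⟨0, le_rfl, hx⟩
  | succ M ih =>
    by_cases h : x ∈ macroBall d M
    · obtain ⟨k, hk, hks⟩ := ih h
      exact ⟨k, hk.trans (Nat.le_succ M), hks⟩
    · exact ⟨M + 1, le_rfl, ⟨hx, h⟩⟩

lemma norm_le_of_macroBall {d : ℕ} {n : ℕ} {x : Fin d → ℝ} (hx : x ∈ macroBall d n) :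
    ‖x‖ ≤ Real.exp n := by
  apply pi_norm_le_iff_of_nonneg (Real.exp_pos _).le |>.2
  intro i
  obtain ⟨h1, h2⟩ := hx i
  rw [Real.norm_eq_abs, abs_le]
  constructor <;> linarith

lemma nuSet_nonempty (d : ℕ) (ρ : ℝ) (n : ℕ) (E : Set (Fin d → ℝ)) :
    (nuSet d ρ n E).Nonempty := by
  refine ⟨_, 1, fun _ _ => -(Real.exp n), fun _ => 2 * Real.exp n, ?_, ?_, rfl⟩
  · intro i
    have := Real.one_le_exp (by positivity : (0:ℝ) ≤ (n:ℝ))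
    show (1:ℝ) ≤ 2 * Real.exp n
    linarith
  · intro x hx
    refine mem_iUnion.2 ⟨0, fun i => ?_⟩
    have hx' := (shell_subset_macroBall d n) hx.2
    obtain ⟨h1, h2⟩ := hx' i
    exact ⟨h1, by simp only; linarith⟩

lemma nuN_nonneg (d : ℕ) (ρ : ℝ) (n : ℕ) (E : Set (Fin d → ℝ)) : 0 ≤ nuN d ρ n E :=
  Real.sInf_nonneg nuSet_nonneg

lemma nuN_le {d : ℕ} {ρ : ℝ} {n : ℕ} {E : Set (Fin d → ℝ)} {s : ℝ}
    (hs : s ∈ nuSet d ρ n E) : nuN d ρ n E ≤ s :=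
  csInf_le ⟨0, fun t ht => nuSet_nonneg t ht⟩ hs

lemma nuN_empty (d : ℕ) (ρ : ℝ) (n : ℕ) : nuN d ρ n (∅ : Set (Fin d → ℝ)) = 0 := by
  refine le_antisymm ?_ (nuN_nonneg _ _ _ _)
  have : (0:ℝ) ∈ nuSet d ρ n ∅ := by
    refine ⟨0, Fin.elim0, Fin.elim0, fun i => i.elim0, by simp, by simp⟩
  exact nuN_le this

lemma DimH_empty (d : ℕ) : DimH d (∅ : Set (Fin d → ℝ)) = 0 := by
  have : { ρ : ℝ | 0 < ρ ∧ Summable (fun n => nuN d ρ n (∅ : Set (Fin d → ℝ))) }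
      = Set.Ioi (0:ℝ) := by
    ext ρ
    simp [nuN_empty, summable_zero, Set.mem_Ioi]
  rw [DimH, this, csInf_Ioi]

lemma subset_iUnion_comp {α ι κ : Type*} (e : κ ≃ ι) (s : ι → Set α) :
    (⋃ i, s i) ⊆ ⋃ k, s (e k) := by
  intro x hx
  obtain ⟨i, hi⟩ := Set.mem_iUnion.1 hx
  exact Set.mem_iUnion.2 ⟨e.symm i, by rwa [Equiv.apply_symm_apply]⟩

lemma exists_cover_lt {d : ℕ} {ρ : ℝ} {n : ℕ} {E : Set (Fin d → ℝ)} {t : ℝ}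
    (ht : nuN d ρ n E < t) :
    ∃ (m : ℕ) (c : Fin m → Fin d → ℝ) (r : Fin m → ℝ),
      (∀ i, 1 ≤ r i) ∧ (E ∩ shell d n ⊆ ⋃ i, uprightBox d (c i) (r i)) ∧
      (∑ i, (r i / Real.exp n) ^ ρ) < t := by
  obtain ⟨s, hs, hst⟩ := exists_lt_of_csInf_lt (nuSet_nonempty d ρ n E) ht
  obtain ⟨m, c, r, h1, h2, rfl⟩ := hs
  exact ⟨m, c, r, h1, h2, hst⟩

/-- Base case: the dimension set is nonempty, via `ρ = d + 1`. -/
lemma cover_base (d : ℕ) (E : Set (Fin d → ℝ)) (n : ℕ) :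
    ∃ (m : ℕ) (c : Fin m → Fin d → ℝ) (r : Fin m → ℝ),
      (∀ i, 1 ≤ r i) ∧ (E ∩ shell d n ⊆ ⋃ i, uprightBox d (c i) (r i)) ∧
      (∑ i, (r i / Real.exp n) ^ ((d:ℝ)+1)) ≤ (4:ℝ)^d * Real.exp (-(n:ℝ)) := by
  classical
  set N : ℕ := ⌈Real.exp n⌉₊ with hNdef
  have hNe : Real.exp n ≤ N := Nat.le_ceil _
  have h1e : (1:ℝ) ≤ Real.exp n := Real.one_le_exp (by positivity)
  have hN2 : (N:ℝ) ≤ 2 * Real.exp n := by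
    have := Nat.ceil_lt_add_one (by positivity : (0:ℝ) ≤ Real.exp n)
    linarith
  set G : Finset (Fin d → ℤ) := Fintype.piFinset (fun _ => Finset.Icc (-(N:ℤ)) ((N:ℤ)-1)) with hG
  have hcard : G.card = (2*N)^d := by
    rw [hG, Fintype.card_piFinset]
    simp [Int.card_Icc]
    congr 1
    omega
  refine ⟨G.card, fun i j => ((G.equivFin.symm i : Fin d → ℤ) j : ℝ), fun _ => 1,
    fun _ => le_rfl, ?_, ?_⟩
  · rintro x ⟨-, hxs⟩
    have hxm := shell_subset_macroBall d n hxs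
    have hg : (fun j => ⌊x j⌋) ∈ G := by
      rw [hG, Fintype.mem_piFinset]
      intro j
      obtain ⟨ha, hb⟩ := hxm j
      rw [Finset.mem_Icc]
      constructor
      · rw [Int.le_floor]
        push_cast
        linarith
      · have : ⌊x j⌋ < (N:ℤ) := Int.floor_lt.2 (by push_cast; linarith)
        omega
    refine Set.mem_iUnion.2 ⟨G.equivFin ⟨_, hg⟩, fun j => ?_⟩
    simp only [Equiv.symm_apply_apply]
    exact ⟨Int.floor_le _, Int.lt_floor_add_one _⟩
  · have hsum : (∑ i : Fin G.card, ((1:ℝ) / Real.exp n) ^ ((d:ℝ)+1))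
        = (G.card : ℝ) * ((1:ℝ)/Real.exp n) ^ ((d:ℝ)+1) := by
      rw [Finset.sum_const, Finset.card_univ, Fintype.card_fin, nsmul_eq_mul]
    rw [hsum, hcard]
    have h1 : ((1:ℝ)/Real.exp n) ^ ((d:ℝ)+1) = Real.exp (-(n:ℝ) * ((d:ℝ)+1)) := by
      rw [one_div, ← Real.exp_neg, Real.rpow_def_of_pos (Real.exp_pos _), Real.log_exp]
    rw [h1]
    push_cast
    calc ((2:ℝ)*N)^d * Real.exp (-(n:ℝ) * ((d:ℝ)+1))
        ≤ (4*Real.exp n)^d * Real.exp (-(n:ℝ) * ((d:ℝ)+1)) := by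
          apply mul_le_mul_of_nonneg_right _ (Real.exp_pos _).le
          apply pow_le_pow_left₀ (by positivity) (by linarith)
      _ = (4:ℝ)^d * Real.exp (-(n:ℝ)) := by
          rw [mul_pow, ← Real.exp_nat_mul, mul_assoc, ← Real.exp_add]
          congr 1
          ring

lemma summable_base (d : ℕ) (E : Set (Fin d → ℝ)) :
    Summable (fun n => nuN d ((d:ℝ)+1) n E) := by
  have key : ∀ n : ℕ, nuN d ((d:ℝ)+1) n E ≤ (4:ℝ)^d * Real.exp (-(n:ℝ)) := by
    intro n
    obtain ⟨m, c, r, h1, h2, h3⟩ := cover_base d E n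
    exact (nuN_le ⟨m, c, r, h1, h2, rfl⟩).trans h3
  apply Summable.of_nonneg_of_le (fun n => nuN_nonneg _ _ _ _) key
  have : (fun n : ℕ => (4:ℝ)^d * Real.exp (-(n:ℝ)))
      = fun n : ℕ => (4:ℝ)^d * (Real.exp (-1))^n := by
    funext n
    rw [← Real.exp_nat_mul]
    congr 1
    ring
  rw [this]
  exact (summable_geometric_of_lt_one (Real.exp_pos _).le
    (Real.exp_lt_one_iff.mpr (by norm_num))).mul_left _

set_option maxHeartbeats 1600000 in
/-- Main comparison lemma. -/
lemma summable_image {d p : ℕ} {E : Set (Fin d → ℝ)} (hE : E.Nonempty)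
    {f : (Fin d → ℝ) → (Fin p → ℝ)} {Q ε R : ℝ} (hQ : 1 ≤ Q)
    (hlip : ∀ x ∈ E, ∀ y ∈ E, dist (f x) (f y) ≤ Q * dist x y)
    (hε : 0 < ε) (hgrow : ∀ x ∈ E, R ≤ ‖x‖ → ε * ‖x‖ ≤ ‖f x‖)
    {ρ : ℝ} (hρ : 0 < ρ) (hsum : Summable (fun n => nuN d ρ n E)) :
    Summable (fun n => nuN p ρ n (f '' E)) := by
  classical
  obtain ⟨x0, hx0⟩ := hE
  set C1 : ℝ := ‖f x0‖ + Q * ‖x0‖ with hC1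
  have hQ0 : (0:ℝ) < Q := lt_of_lt_of_le one_pos hQ
  have hC1nonneg : 0 ≤ C1 := by positivity
  obtain ⟨A, hA⟩ := exists_nat_gt (max R (1/ε))
  have hAexp : (A:ℝ) < Real.exp A := by
    have := Real.add_one_le_exp (A:ℝ); linarith
  have hAR : R < Real.exp A := lt_of_le_of_lt (le_max_left R (1/ε)) (hA.trans hAexp)
  have hAε : 1/ε < Real.exp A := lt_of_le_of_lt (le_max_right R (1/ε)) (hA.trans hAexp)
  obtain ⟨B, hB'⟩ := exists_nat_gt (2*Q*Real.exp 1)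
  have hB : 2*Q*Real.exp 1 < Real.exp B := by
    have := Real.add_one_le_exp (B:ℝ); linarith
  obtain ⟨N1, hN1⟩ := exists_nat_gt (2*C1)
  set N0 : ℕ := N1 + B + 1 with hN0def
  have hN0B : B ≤ N0 := by omega
  have hN0C : 2*C1 < Real.exp ((N0:ℝ) - 1) := by
    have h1 : ((N1:ℝ)) ≤ (N0:ℝ) - 1 := by
      rw [hN0def]; push_cast; linarith [(Nat.cast_nonneg B : (0:ℝ) ≤ B)]
    have h2 : ((N0:ℝ) - 1) + 1 ≤ Real.exp ((N0:ℝ)-1) := Real.add_one_le_exp _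
    linarith
  set K : ℝ := (3*Q*Real.exp A)^ρ with hKdef
  have hKpos : 0 < K := Real.rpow_pos_of_pos (by positivity) _
  have key : ∀ n, N0 ≤ n → nuN p ρ n (f '' E) ≤
      K * (∑ j ∈ Finset.range (A+B+1), nuN d ρ (n - B + j) E)
        + K * (A+B+1) * (1/2:ℝ)^n := by
    intro n hn
    have hn1 : 1 ≤ n := by omega
    have hBn : B ≤ n := by omega
    have covers : ∀ k : ℕ, ∃ (m : ℕ) (c : Fin m → Fin d → ℝ) (r : Fin m → ℝ),
        (∀ i, 1 ≤ r i) ∧ (E ∩ shell d k ⊆ ⋃ i, uprightBox d (c i) (r i)) ∧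
        (∑ i, (r i / Real.exp k) ^ ρ) < nuN d ρ k E + (1/2:ℝ)^n := by
      intro k
      exact exists_cover_lt (lt_add_of_pos_right _ (by positivity))
    choose m c r hr hcov hsum' using covers
    let C : ∀ k : ℕ, Fin (m k) → Fin p → ℝ := fun k i =>
      if h : (E ∩ shell d k ∩ uprightBox d (c k i) (r k i)).Nonempty
      then fun jj => f h.some jj - Q * r k i
      else fun _ => 0
    let I := Σ k : Fin (A+B+1), Fin (m (n - B + (k:ℕ)))
    let eqv : Fin (Fintype.card I) ≃ I := (Fintype.equivFin I).symm
    have hs1 : ∀ k i, (1:ℝ) ≤ 3*Q*r k i := by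
      intro k i
      have := hr k i
      nlinarith
    have hmem : nuN p ρ n (f '' E) ≤ ∑ iM : Fin (Fintype.card I),
        ((3*Q*r (n - B + ((eqv iM).1 : ℕ)) (eqv iM).2) / Real.exp n) ^ ρ := by
      apply nuN_le
      refine ⟨_, fun iM => C (n - B + ((eqv iM).1 : ℕ)) (eqv iM).2,
        fun iM => 3*Q*r (n - B + ((eqv iM).1 : ℕ)) (eqv iM).2,
        fun iM => hs1 _ _, ?_, rfl⟩
      refine subset_trans ?_ (subset_iUnion_comp eqv
        (fun σ => uprightBox p (C (n - B + ((σ.1 : ℕ))) σ.2) (3*Q*r (n - B + ((σ.1 : ℕ))) σ.2)))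
      rintro y ⟨⟨x, hxE, rfl⟩, hys⟩
      obtain ⟨nm, rfl⟩ : ∃ nm, n = nm + 1 := ⟨n - 1, by omega⟩
      have hys' : f x ∈ macroBall p (nm+1) \ macroBall p nm := hys
      have hub : ‖f x‖ ≤ Real.exp ((nm:ℝ)+1) := by
        have := norm_le_of_macroBall hys'.1
        push_cast at this ⊢
        exact this
      have hlb : Real.exp (nm:ℝ) ≤ ‖f x‖ := by
        have h1 := hys'.2
        simp only [macroBall, Set.mem_setOf_eq, Set.mem_Ico, not_forall] at h1
        obtain ⟨i, hi⟩ := h1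
        have h2 : Real.exp (nm:ℝ) ≤ |f x i| := by
          rcases not_and_or.1 hi with h | h
          · push_neg at h
            rw [abs_of_nonpos (by linarith [Real.exp_pos ((nm:ℕ):ℝ)])]
            linarith
          · push_neg at h
            rw [abs_of_nonneg (by linarith [Real.exp_pos ((nm:ℕ):ℝ)])]
            linarith
        have h3 := norm_le_pi_norm (f x) i
        rw [Real.norm_eq_abs] at h3
        linarith
      have hxub : ‖x‖ < Real.exp (((nm+1):ℝ) + A) := by
        rcases le_or_gt R ‖x‖ with hR | hR
        · have h1 := hgrow x hxE hR
          have h2 : ‖x‖ ≤ Real.exp ((nm:ℝ)+1) * (1/ε) := by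
            rw [mul_one_div, le_div_iff₀ hε]
            linarith
          calc ‖x‖ ≤ Real.exp ((nm:ℝ)+1) * (1/ε) := h2
            _ < Real.exp ((nm:ℝ)+1) * Real.exp A :=
                mul_lt_mul_of_pos_left hAε (Real.exp_pos _)
            _ = Real.exp (((nm+1):ℝ) + A) := by rw [← Real.exp_add]
        · calc ‖x‖ < R := hR
            _ < Real.exp A := hAR
            _ ≤ Real.exp (((nm+1):ℝ) + A) := by
                apply Real.exp_le_exp.2
                have : (0:ℝ) ≤ ((nm:ℝ)+1) := by positivity
                linarith
      have hxball : x ∈ macroBall d ((nm+1) + A) := by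
        intro i
        have h1 : |x i| ≤ ‖x‖ := by
          rw [← Real.norm_eq_abs]; exact norm_le_pi_norm x i
        have h2 : |x i| < Real.exp ((((nm+1) + A : ℕ)):ℝ) := by
          push_cast
          push_cast at hxub
          linarith
        exact ⟨by linarith [(abs_lt.1 h2).1], (abs_lt.1 h2).2⟩
      obtain ⟨k, hkle, hks⟩ := exists_shell hxball
      have hxk : ‖x‖ ≤ Real.exp k := norm_le_of_macroBall (shell_subset_macroBall d k hks)
      have hfub : ‖f x‖ ≤ C1 + Q * Real.exp k := by
        have hd1 : ‖f x‖ - ‖f x0‖ ≤ dist (f x) (f x0) := by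
          rw [dist_eq_norm]; exact norm_sub_norm_le _ _
        have hd2 := hlip x hxE x0 hx0
        have hd3 : dist x x0 ≤ ‖x‖ + ‖x0‖ := dist_le_norm_add_norm _ _
        have hd4 : dist x x0 ≤ Real.exp k + ‖x0‖ := by linarith
        have hd5 : Q * dist x x0 ≤ Q * (Real.exp k + ‖x0‖) :=
          mul_le_mul_of_nonneg_left hd4 hQ0.le
        rw [hC1]
        nlinarith
      have hklb : (nm+1) - B ≤ k := by
        have hnN : Real.exp ((N0:ℝ)-1) ≤ Real.exp ((nm:ℝ)) := by
          apply Real.exp_le_exp.2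
          have h0 : (N0:ℝ) ≤ ((nm+1 : ℕ):ℝ) := Nat.cast_le.2 hn
          have h0' : (N0:ℝ) = N1 + B + 1 := by rw [hN0def]; push_cast; ring
          push_cast at h0
          linarith
        have h2 : Real.exp ((nm:ℝ)) ≤ 2 * (Q * Real.exp k) := by linarith
        have h3 : Real.exp ((nm:ℝ)+1) ≤ 2*Q*Real.exp 1 * Real.exp k := by
          rw [Real.exp_add]
          have e1 : (0:ℝ) < Real.exp 1 := Real.exp_pos 1
          nlinarith [Real.exp_pos ((k:ℕ):ℝ)]
        have h4 : Real.exp ((nm:ℝ)+1) < Real.exp ((B:ℝ) + k) :=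
          lt_of_le_of_lt h3 (by
            rw [Real.exp_add]
            exact mul_lt_mul_of_pos_right hB (Real.exp_pos _))
        have h5 : (nm:ℝ)+1 < (B:ℝ) + k := Real.exp_lt_exp.1 h4
        have h6 : nm+1 < B + k := by exact_mod_cast h5
        omega
      set j : ℕ := k - ((nm+1) - B) with hjdef
      have hj : j < A+B+1 := by omega
      set k' : ℕ := (nm+1) - B + j with hk'def
      have hk'' : k = k' := by omega
      rw [hk''] at hks
      have hxcov := hcov k' ⟨hxE, hks⟩
      simp only [Set.mem_iUnion] at hxcov
      obtain ⟨i, hxbox⟩ := hxcov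
      suffices hbox2 : f x ∈ uprightBox p (C k' i) (3*Q*r k' i) by
        exact Set.mem_iUnion.2 ⟨⟨⟨j, hj⟩, i⟩, hbox2⟩
      have hT : (E ∩ shell d k' ∩ uprightBox d (c k' i) (r k' i)).Nonempty :=
        ⟨x, ⟨⟨hxE, hks⟩, hxbox⟩⟩
      have hCeq : C k' i = fun jj => f hT.some jj - Q * r k' i := by
        simp only [C]
        rw [dif_pos hT]
      have hzmem := hT.some_mem
      have hr0 : (0:ℝ) ≤ r k' i := le_trans zero_le_one (hr k' i)
      have hdxz : dist x hT.some ≤ r k' i := by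
        rw [dist_pi_le_iff hr0]
        intro jj
        have hx1 := hxbox jj
        have hz1 := hzmem.2 jj
        simp only [Set.mem_Ico] at hx1 hz1
        rw [Real.dist_eq, abs_le]
        constructor <;> linarith [hx1.1, hx1.2, hz1.1, hz1.2]
      have hdf : dist (f x) (f hT.some) ≤ Q * r k' i :=
        (hlip x hxE hT.some hzmem.1.1).trans (mul_le_mul_of_nonneg_left hdxz hQ0.le)
      intro jj
      have hco : dist (f x jj) (f hT.some jj) ≤ Q * r k' i :=
        (dist_le_pi_dist (f x) (f hT.some) jj).trans hdf
      rw [Real.dist_eq, abs_le] at hco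
      rw [hCeq]
      have hQr : (1:ℝ) ≤ Q * r k' i := by nlinarith [hr k' i]
      refine ⟨by simp only; linarith [hco.1], by simp only; linarith [hco.2]⟩
    have perk : ∀ k : ℕ, k ≤ n + A →
        (∑ i : Fin (m k), ((3*Q*r k i) / Real.exp n) ^ ρ)
          ≤ K * (nuN d ρ k E + (1/2:ℝ)^n) := by
      intro k hk
      have hfac : ∀ i : Fin (m k), ((3*Q*r k i) / Real.exp n) ^ ρ
          ≤ K * (r k i / Real.exp k) ^ ρ := by
        intro i
        have h0 : (0:ℝ) ≤ r k i := le_trans zero_le_one (hr k i)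
        have heq : (3*Q*r k i) / Real.exp n
            = (3*Q*(Real.exp k / Real.exp n)) * (r k i / Real.exp k) := by
          field_simp
        rw [heq, Real.mul_rpow (by positivity) (by positivity), hKdef]
        apply mul_le_mul_of_nonneg_right _ (Real.rpow_nonneg (by positivity) _)
        apply Real.rpow_le_rpow (by positivity) _ hρ.le
        have hek : Real.exp (k:ℝ) / Real.exp (n:ℝ) ≤ Real.exp (A:ℝ) := by
          rw [div_le_iff₀ (Real.exp_pos _), ← Real.exp_add]
          apply Real.exp_le_exp.2
          have : (k:ℝ) ≤ ((n+A:ℕ):ℝ) := Nat.cast_le.2 hk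
          push_cast at this
          linarith
        nlinarith [Real.exp_pos ((A:ℕ):ℝ), div_nonneg (Real.exp_pos ((k:ℕ):ℝ)).le (Real.exp_pos ((n:ℕ):ℝ)).le]
      calc (∑ i : Fin (m k), ((3*Q*r k i) / Real.exp n) ^ ρ)
          ≤ ∑ i : Fin (m k), K * (r k i / Real.exp k)^ρ :=
            Finset.sum_le_sum (fun i _ => hfac i)
        _ = K * ∑ i : Fin (m k), (r k i / Real.exp k)^ρ := by rw [Finset.mul_sum]
        _ ≤ K * (nuN d ρ k E + (1/2:ℝ)^n) :=
            mul_le_mul_of_nonneg_left (hsum' k).le hKpos.le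
    calc nuN p ρ n (f '' E)
        ≤ ∑ iM : Fin (Fintype.card I),
            ((3*Q*r (n - B + ((eqv iM).1 : ℕ)) (eqv iM).2) / Real.exp n) ^ ρ := hmem
      _ = ∑ σ : I, ((3*Q*r (n - B + ((σ.1 : ℕ))) σ.2) / Real.exp n) ^ ρ :=
          Equiv.sum_comp eqv (fun σ => ((3*Q*r (n - B + ((σ.1 : ℕ))) σ.2) / Real.exp n) ^ ρ)
      _ = ∑ k : Fin (A+B+1), ∑ i : Fin (m (n - B + (k:ℕ))),
            ((3*Q*r (n - B + (k:ℕ)) i) / Real.exp n) ^ ρ := by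
          rw [← Finset.univ_sigma_univ, Finset.sum_sigma]
      _ ≤ ∑ k : Fin (A+B+1), K * (nuN d ρ (n - B + (k:ℕ)) E + (1/2:ℝ)^n) := by
          apply Finset.sum_le_sum
          intro k _
          apply perk
          have := k.isLt
          omega
      _ = K * (∑ k : Fin (A+B+1), nuN d ρ (n - B + (k:ℕ)) E)
            + K * (A+B+1) * (1/2:ℝ)^n := by
          simp only [mul_add]
          rw [Finset.sum_add_distrib, ← Finset.mul_sum, Finset.sum_const,
            Finset.card_univ, Fintype.card_fin, nsmul_eq_mul]
          push_cast
          ring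
      _ = K * (∑ j ∈ Finset.range (A+B+1), nuN d ρ (n - B + j) E)
            + K * (A+B+1) * (1/2:ℝ)^n := by
          rw [Fin.sum_univ_eq_sum_range (fun j => nuN d ρ (n - B + j) E)]
  have hg : Summable (fun n : ℕ =>
      K * (∑ j ∈ Finset.range (A+B+1), nuN d ρ (n - B + j) E)
        + K*(A+B+1)*(1/2:ℝ)^n) := by
    apply Summable.add
    · apply Summable.mul_left
      apply summable_sum
      intro j _
      apply (summable_nat_add_iff B).mp
      have : (fun n : ℕ => nuN d ρ (n + B - B + j) E) = fun n => nuN d ρ (n + j) E := by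
        funext n
        congr 1
        omega
      rw [this]
      exact (summable_nat_add_iff j).mpr hsum
    · apply Summable.mul_left
      exact summable_geometric_of_lt_one (by norm_num) (by norm_num)
  apply (summable_nat_add_iff N0).mp
  apply Summable.of_nonneg_of_le (fun n => nuN_nonneg _ _ _ _)
    (fun n => key (n + N0) (by omega))
  exact (summable_nat_add_iff N0).mpr hg

end MacroAux

/-- Lipschitz maps with at least linear growth at infinity do not increase the
macroscopic Hausdorff dimension. -/
theorem dimH_image_le_of_lipschitz (d p : ℕ) (E : Set (Fin d → ℝ))
    (f : (Fin d → ℝ) → (Fin p → ℝ)) (q : ℝ)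
    (hlip : ∀ x ∈ E, ∀ y ∈ E, dist (f x) (f y) ≤ q * dist x y)
    (hgrow : ∃ ε > (0 : ℝ), ∃ R : ℝ, ∀ x ∈ E, R ≤ ‖x‖ → ε * ‖x‖ ≤ ‖f x‖) :
    DimH p (f '' E) ≤ DimH d E := by
  rcases Set.eq_empty_or_nonempty E with rfl | hE
  · rw [Set.image_empty, MacroAux.DimH_empty, MacroAux.DimH_empty]
  obtain ⟨ε, hε, R, hgrow⟩ := hgrow
  have hlip' : ∀ x ∈ E, ∀ y ∈ E, dist (f x) (f y) ≤ max q 1 * dist x y := by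
    intro x hx y hy
    exact (hlip x hx y hy).trans (by
      have := dist_nonneg (x := x) (y := y)
      nlinarith [le_max_left q 1])
  apply csInf_le_csInf
  · exact ⟨0, fun ρ hρ => hρ.1.le⟩
  · exact ⟨(d:ℝ)+1, by positivity, MacroAux.summable_base d E⟩
  · rintro ρ ⟨hρ, hsum⟩
    exact ⟨hρ, MacroAux.summable_image hE (le_max_right q 1) hlip' hε hgrow hρ hsum⟩
end

section
/- (Bi-Lipschitz invariance) If f : ℝ^d → ℝ^d satisfies L^{-1}|x − y| ≤ |f(x) − f(y)| ≤ L|x − y| for all x, y ∈ E ⊆ ℝ^d (some L ≥ 1), then Dim_H f(E) = Dim_H E. -/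
open MeasureTheory Real Set

namespace BTaux

def covSet (d : ℕ) (ρ : ℝ) (n : ℕ) (E : Set (Fin d → ℝ)) : Set ℝ :=
  { s : ℝ | ∃ (m : ℕ) (c : Fin m → Fin d → ℝ) (r : Fin m → ℝ),
    (∀ i, 1 ≤ r i) ∧ (E ∩ shell d n ⊆ ⋃ i, uprightBox d (c i) (r i)) ∧
    s = ∑ i, (r i / Real.exp n) ^ ρ }

lemma nuN_eq (d : ℕ) (ρ : ℝ) (n : ℕ) (E : Set (Fin d → ℝ)) :
    nuN d ρ n E = sInf (covSet d ρ n E) := rfl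

lemma covSet_nonneg {d : ℕ} {ρ : ℝ} {n : ℕ} {E : Set (Fin d → ℝ)} :
    ∀ s ∈ covSet d ρ n E, 0 ≤ s := by
  rintro s ⟨m, c, r, hr, -, rfl⟩
  exact Finset.sum_nonneg fun i _ => Real.rpow_nonneg
    (div_nonneg (le_trans zero_le_one (hr i)) (Real.exp_nonneg _)) _

lemma covSet_bddBelow {d : ℕ} {ρ : ℝ} {n : ℕ} {E : Set (Fin d → ℝ)} :
    BddBelow (covSet d ρ n E) := ⟨0, fun s hs => covSet_nonneg s hs⟩

lemma shell_subset_macroBall (d n : ℕ) : shell d n ⊆ macroBall d n := by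
  cases n with
  | zero => exact subset_rfl
  | succ n => exact diff_subset

lemma covSet_nonempty (d : ℕ) (ρ : ℝ) (n : ℕ) (E : Set (Fin d → ℝ)) :
    (covSet d ρ n E).Nonempty := by
  refine ⟨_, 1, (fun _ _ => -(Real.exp n)), (fun _ => 2 * Real.exp n), ?_, ?_, rfl⟩
  · intro i
    have := Real.one_le_exp (Nat.cast_nonneg n : (0:ℝ) ≤ n)
    simp only []
    linarith
  · intro x hx
    refine Set.mem_iUnion.2 ⟨0, fun i => ?_⟩
    have h := shell_subset_macroBall d n hx.2 i
    simp only [uprightBox, Set.mem_setOf_eq, Set.mem_Ico] at h ⊢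
    constructor
    · exact h.1
    · linarith [h.2]

lemma nuN_nonneg (d : ℕ) (ρ : ℝ) (n : ℕ) (E : Set (Fin d → ℝ)) :
    0 ≤ nuN d ρ n E :=
  Real.sInf_nonneg covSet_nonneg

lemma nuN_le_of_cover {d : ℕ} {ρ : ℝ} {n : ℕ} {E : Set (Fin d → ℝ)}
    {ι : Type} [Fintype ι] (c : ι → Fin d → ℝ) (r : ι → ℝ)
    (hr : ∀ i, 1 ≤ r i) (hcov : E ∩ shell d n ⊆ ⋃ i, uprightBox d (c i) (r i)) :
    nuN d ρ n E ≤ ∑ i, (r i / Real.exp n) ^ ρ := by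
  rw [nuN_eq]
  refine csInf_le covSet_bddBelow ?_
  classical
  let e := Fintype.equivFin ι
  refine ⟨Fintype.card ι, c ∘ e.symm, r ∘ e.symm, fun i => hr _, ?_, ?_⟩
  · intro x hx
    rcases Set.mem_iUnion.1 (hcov hx) with ⟨i, hi⟩
    exact Set.mem_iUnion.2 ⟨e i, by simpa using hi⟩
  · exact (Equiv.sum_comp e.symm fun i => (r i / Real.exp n) ^ ρ).symm

lemma exists_near_cover (d : ℕ) (ρ : ℝ) (n : ℕ) (E : Set (Fin d → ℝ)) {ε : ℝ} (hε : 0 < ε) :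
    ∃ (m : ℕ) (c : Fin m → Fin d → ℝ) (r : Fin m → ℝ),
      (∀ i, 1 ≤ r i) ∧ (E ∩ shell d n ⊆ ⋃ i, uprightBox d (c i) (r i)) ∧
      ∑ i, (r i / Real.exp n) ^ ρ ≤ nuN d ρ n E + ε := by
  have h := exists_lt_of_csInf_lt (covSet_nonempty d ρ n E)
    (lt_add_of_pos_right (sInf (covSet d ρ n E)) hε)
  rcases h with ⟨s, ⟨m, c, r, hr, hcov, rfl⟩, hlt⟩
  exact ⟨m, c, r, hr, hcov, le_of_lt hlt⟩

lemma macroBall_mono (d : ℕ) {m m' : ℕ} (h : m ≤ m') : macroBall d m ⊆ macroBall d m' := by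
  intro x hx i
  have := hx i
  have hexp : Real.exp m ≤ Real.exp m' := Real.exp_le_exp.2 (by exact_mod_cast h)
  simp only [Set.mem_Ico] at this ⊢
  exact ⟨by linarith [this.1], lt_of_lt_of_le this.2 hexp⟩

lemma exists_shell_of_mem_macroBall {d : ℕ} {m : ℕ} {x : Fin d → ℝ}
    (hx : x ∈ macroBall d m) : ∃ k ≤ m, x ∈ shell d k := by
  induction m with
  | zero => exact ⟨0, le_rfl, hx⟩
  | succ m ih =>
    by_cases h : x ∈ macroBall d m
    · rcases ih h with ⟨k, hk, hks⟩
      exact ⟨k, hk.trans (Nat.le_succ m), hks⟩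
    · exact ⟨m + 1, le_rfl, ⟨hx, h⟩⟩

end BTaux

namespace BTaux

lemma mem_macroBall_of_image_shell {d : ℕ} {E : Set (Fin d → ℝ)}
    {f : (Fin d → ℝ) → (Fin d → ℝ)} {L : ℝ} (hL : 1 ≤ L)
    (hbilip : ∀ x ∈ E, ∀ y ∈ E,
      L⁻¹ * dist x y ≤ dist (f x) (f y) ∧ dist (f x) (f y) ≤ L * dist x y)
    {x0 : Fin d → ℝ} (hx0 : x0 ∈ E) (a : ℕ)
    (ha : L + (L * ‖f x0‖ + ‖x0‖) + 1 ≤ Real.exp a)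
    (n : ℕ) (x : Fin d → ℝ) (hx : x ∈ E) (hfx : f x ∈ shell d n) :
    x ∈ macroBall d (n + a) := by
  have hL0 : (0:ℝ) < L := lt_of_lt_of_le one_pos hL
  have hfxn : ‖f x‖ ≤ Real.exp n := by
    refine (pi_norm_le_iff_of_nonneg (Real.exp_nonneg _)).2 fun i => ?_
    have h := shell_subset_macroBall d n hfx i
    simp only [Set.mem_Ico] at h
    rw [Real.norm_eq_abs, abs_le]
    exact ⟨h.1, le_of_lt h.2⟩
  have hdist : dist x x0 ≤ L * dist (f x) (f x0) := by
    have h := (hbilip x hx x0 hx0).1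
    have := mul_le_mul_of_nonneg_left h (le_of_lt hL0)
    rwa [← mul_assoc, mul_inv_cancel₀ (ne_of_gt hL0), one_mul] at this
  have hdf : dist (f x) (f x0) ≤ ‖f x‖ + ‖f x0‖ := dist_le_norm_add_norm _ _
  have hxnorm : ‖x‖ ≤ dist x x0 + ‖x0‖ := by
    rw [dist_eq_norm]
    calc ‖x‖ = ‖x - x0 + x0‖ := by ring_nf
    _ ≤ ‖x - x0‖ + ‖x0‖ := norm_add_le _ _
  have hxbound : ‖x‖ ≤ L * Real.exp n + (L * ‖f x0‖ + ‖x0‖) := by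
    nlinarith [norm_nonneg (f x0), norm_nonneg x0]
  have hen : (1:ℝ) ≤ Real.exp n := Real.one_le_exp (Nat.cast_nonneg n)
  have hkey : ‖x‖ < Real.exp (n + a : ℕ) := by
    have : Real.exp ((n + a : ℕ) : ℝ) = Real.exp n * Real.exp a := by
      push_cast
      rw [← Real.exp_add]
    rw [this]
    have hD : (0:ℝ) ≤ L * ‖f x0‖ + ‖x0‖ := by positivity
    nlinarith [Real.exp_pos (n:ℝ)]
  intro i
  have := (norm_le_pi_norm x i).trans_lt hkey
  rw [Real.norm_eq_abs, abs_lt] at this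
  exact ⟨le_of_lt this.1, this.2⟩

end BTaux
namespace BTaux

lemma cover_transfer {d : ℕ} {ρ : ℝ} (hρ : 0 < ρ) {E : Set (Fin d → ℝ)}
    {f : (Fin d → ℝ) → (Fin d → ℝ)} {L : ℝ} (hL : 1 ≤ L)
    (hbilip : ∀ x ∈ E, ∀ y ∈ E,
      L⁻¹ * dist x y ≤ dist (f x) (f y) ∧ dist (f x) (f y) ≤ L * dist x y)
    {x0 : Fin d → ℝ} (hx0 : x0 ∈ E) (a : ℕ)
    (ha : L + (L * ‖f x0‖ + ‖x0‖) + 1 ≤ Real.exp a)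
    (n : ℕ) {ε : ℝ} (hε : 0 < ε) :
    nuN d ρ n (f '' E) ≤
      ∑ k ∈ Finset.range (n + a + 1),
        (2 * L + 1) ^ ρ * ((Real.exp k / Real.exp n) ^ ρ * (nuN d ρ k E + ε)) := by
  classical
  have hL0 : (0:ℝ) < L := lt_of_lt_of_le one_pos hL
  obtain ⟨m, c, r, hr, hcov, hsum⟩ :
      ∃ (m : ℕ → ℕ) (c : ∀ k, Fin (m k) → Fin d → ℝ) (r : ∀ k, Fin (m k) → ℝ),
        (∀ k, ∀ i, 1 ≤ r k i) ∧
        (∀ k, E ∩ shell d k ⊆ ⋃ i, uprightBox d (c k i) (r k i)) ∧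
        (∀ k, ∑ i, (r k i / Real.exp k) ^ ρ ≤ nuN d ρ k E + ε) := by
    have h : ∀ k : ℕ, ∃ (m : ℕ) (c : Fin m → Fin d → ℝ) (r : Fin m → ℝ),
        (∀ i, 1 ≤ r i) ∧ (E ∩ shell d k ⊆ ⋃ i, uprightBox d (c i) (r i)) ∧
        ∑ i, (r i / Real.exp k) ^ ρ ≤ nuN d ρ k E + ε :=
      fun k => exists_near_cover d ρ k E hε
    choose m c r hr hcov hsum using h
    exact ⟨m, c, r, hr, hcov, hsum⟩
  set ι := Σ k : Fin (n + a + 1), Fin (m k) with hι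
  let piv : ∀ (k : ℕ), Fin (m k) → (Fin d → ℝ) := fun k i =>
    if h : (E ∩ shell d k ∩ uprightBox d (c k i) (r k i)).Nonempty then f h.choose else 0
  let newc : ι → Fin d → ℝ := fun p j => piv p.1 p.2 j - L * r p.1 p.2
  let newr : ι → ℝ := fun p => 2 * L * r p.1 p.2 + 1
  have hr' : ∀ p : ι, 1 ≤ newr p := by
    intro p
    have := hr p.1 p.2
    simp only [newr]
    nlinarith
  have hcov' : (f '' E) ∩ shell d n ⊆ ⋃ p : ι, uprightBox d (newc p) (newr p) := by
    rintro y ⟨⟨x, hxE, rfl⟩, hysh⟩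
    have hxm : x ∈ macroBall d (n + a) :=
      mem_macroBall_of_image_shell hL hbilip hx0 a ha n x hxE hysh
    obtain ⟨k, hk, hks⟩ := exists_shell_of_mem_macroBall hxm
    obtain ⟨i, hi⟩ := Set.mem_iUnion.1 (hcov k ⟨hxE, hks⟩)
    have hS : (E ∩ shell d k ∩ uprightBox d (c k i) (r k i)).Nonempty :=
      ⟨x, ⟨hxE, hks⟩, hi⟩
    have hkfin : k < n + a + 1 := by omega
    refine Set.mem_iUnion.2 ⟨⟨⟨k, hkfin⟩, i⟩, ?_⟩
    have hpiv : piv k i = f hS.choose := dif_pos hS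
    obtain ⟨⟨hx'E, _⟩, hx'box⟩ := hS.choose_spec
    set x' := hS.choose
    have hdxx' : dist x x' ≤ r k i := by
      refine dist_pi_le_iff (le_trans zero_le_one (hr k i)) |>.2 fun j => ?_
      have h1 := hi j
      have h2 := hx'box j
      simp only [uprightBox, Set.mem_setOf_eq, Set.mem_Ico] at h1 h2
      rw [Real.dist_eq, abs_le]
      constructor <;> linarith [h1.1, h1.2, h2.1, h2.2]
    have hdff : dist (f x) (f x') ≤ L * r k i := by
      calc dist (f x) (f x') ≤ L * dist x x' := (hbilip x hxE x' hx'E).2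
      _ ≤ L * r k i := by nlinarith
    intro j
    have hj : dist (f x j) (f x' j) ≤ L * r k i :=
      le_trans (dist_le_pi_dist (f x) (f x') j) hdff
    rw [Real.dist_eq, abs_le] at hj
    simp only [newc, newr, hpiv, Set.mem_Ico]
    constructor
    · linarith [hj.1]
    · linarith [hj.2, hr k i, hL0]
  calc nuN d ρ n (f '' E) ≤ ∑ p : ι, (newr p / Real.exp n) ^ ρ :=
        nuN_le_of_cover newc newr hr' hcov'
  _ = ∑ k : Fin (n + a + 1), ∑ i : Fin (m k), ((2 * L * r k i + 1) / Real.exp n) ^ ρ := by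
        rw [← Finset.univ_sigma_univ, Finset.sum_sigma]
  _ ≤ ∑ k : Fin (n + a + 1),
        (2 * L + 1) ^ ρ * ((Real.exp (k:ℕ) / Real.exp n) ^ ρ * (nuN d ρ (k:ℕ) E + ε)) := by
        refine Finset.sum_le_sum fun k _ => ?_
        have hexpk : (0:ℝ) < Real.exp (k:ℕ) := Real.exp_pos _
        have hexpn : (0:ℝ) < Real.exp n := Real.exp_pos _
        have step1 : ∀ i : Fin (m k), ((2 * L * r k i + 1) / Real.exp n) ^ ρ ≤
            (2 * L + 1) ^ ρ * ((Real.exp (k:ℕ) / Real.exp n) ^ ρ * (r k i / Real.exp (k:ℕ)) ^ ρ) := by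
          intro i
          have hri := hr k i
          have hbase : (0:ℝ) ≤ (2 * L * r k i + 1) / Real.exp n := by positivity
          have h1 : (2 * L * r k i + 1) / Real.exp n ≤
              (2 * L + 1) * ((Real.exp (k:ℕ) / Real.exp n) * (r k i / Real.exp (k:ℕ))) := by
            have heq : (2 * L + 1) * ((Real.exp (k:ℕ) / Real.exp n) * (r k i / Real.exp (k:ℕ)))
                = (2 * L + 1) * r k i / Real.exp n := by
              field_simp
            rw [heq]
            gcongr
            nlinarith
          calc ((2 * L * r k i + 1) / Real.exp n) ^ ρ
              ≤ ((2 * L + 1) * ((Real.exp (k:ℕ) / Real.exp n) * (r k i / Real.exp (k:ℕ)))) ^ ρ :=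
                Real.rpow_le_rpow hbase h1 (le_of_lt hρ)
          _ = (2 * L + 1) ^ ρ * ((Real.exp (k:ℕ) / Real.exp n) ^ ρ * (r k i / Real.exp (k:ℕ)) ^ ρ) := by
                rw [Real.mul_rpow (by positivity) (by positivity),
                  Real.mul_rpow (by positivity) (by positivity)]
        calc ∑ i : Fin (m k), ((2 * L * r k i + 1) / Real.exp n) ^ ρ
            ≤ ∑ i : Fin (m k),
              (2 * L + 1) ^ ρ * ((Real.exp (k:ℕ) / Real.exp n) ^ ρ * (r k i / Real.exp (k:ℕ)) ^ ρ) :=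
              Finset.sum_le_sum fun i _ => step1 i
        _ = (2 * L + 1) ^ ρ * ((Real.exp (k:ℕ) / Real.exp n) ^ ρ *
              ∑ i : Fin (m k), (r k i / Real.exp (k:ℕ)) ^ ρ) := by
              rw [← Finset.mul_sum, ← Finset.mul_sum]
        _ ≤ (2 * L + 1) ^ ρ * ((Real.exp (k:ℕ) / Real.exp n) ^ ρ * (nuN d ρ (k:ℕ) E + ε)) := by
              have := hsum (k:ℕ)
              have h1 : (0:ℝ) ≤ (2 * L + 1) ^ ρ := Real.rpow_nonneg (by linarith) _
              have h2 : (0:ℝ) ≤ (Real.exp (k:ℕ) / Real.exp n) ^ ρ := Real.rpow_nonneg (by positivity) _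
              exact mul_le_mul_of_nonneg_left (mul_le_mul_of_nonneg_left this h2) h1
  _ = ∑ k ∈ Finset.range (n + a + 1),
        (2 * L + 1) ^ ρ * ((Real.exp k / Real.exp n) ^ ρ * (nuN d ρ k E + ε)) := by
        rw [Fin.sum_univ_eq_sum_range
          (fun k => (2 * L + 1) ^ ρ * ((Real.exp k / Real.exp n) ^ ρ * (nuN d ρ k E + ε)))]

end BTaux
namespace BTaux

lemma cover_transfer' {d : ℕ} {ρ : ℝ} (hρ : 0 < ρ) {E : Set (Fin d → ℝ)}
    {f : (Fin d → ℝ) → (Fin d → ℝ)} {L : ℝ} (hL : 1 ≤ L)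
    (hbilip : ∀ x ∈ E, ∀ y ∈ E,
      L⁻¹ * dist x y ≤ dist (f x) (f y) ∧ dist (f x) (f y) ≤ L * dist x y)
    {x0 : Fin d → ℝ} (hx0 : x0 ∈ E) (a : ℕ)
    (ha : L + (L * ‖f x0‖ + ‖x0‖) + 1 ≤ Real.exp a) (n : ℕ) :
    nuN d ρ n (f '' E) ≤
      ∑ k ∈ Finset.range (n + a + 1),
        (2 * L + 1) ^ ρ * ((Real.exp k / Real.exp n) ^ ρ * nuN d ρ k E) := by
  refine le_of_forall_pos_le_add fun δ hδ => ?_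
  set B : ℝ := ∑ k ∈ Finset.range (n + a + 1),
      (2 * L + 1) ^ ρ * (Real.exp k / Real.exp n) ^ ρ with hB
  have hBnonneg : 0 ≤ B := Finset.sum_nonneg fun k _ =>
    mul_nonneg (Real.rpow_nonneg (by linarith) _) (Real.rpow_nonneg (by positivity) _)
  have hε : 0 < δ / (B + 1) := div_pos hδ (by linarith)
  calc nuN d ρ n (f '' E)
      ≤ ∑ k ∈ Finset.range (n + a + 1),
        (2 * L + 1) ^ ρ * ((Real.exp k / Real.exp n) ^ ρ * (nuN d ρ k E + δ / (B + 1))) :=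
        cover_transfer hρ hL hbilip hx0 a ha n hε
  _ = (∑ k ∈ Finset.range (n + a + 1),
        (2 * L + 1) ^ ρ * ((Real.exp k / Real.exp n) ^ ρ * nuN d ρ k E))
        + (δ / (B + 1)) * B := by
        rw [hB, Finset.mul_sum, ← Finset.sum_add_distrib]
        refine Finset.sum_congr rfl fun k _ => by ring
  _ ≤ _ := by
        have : (δ / (B + 1)) * B ≤ δ := by
          rw [div_mul_eq_mul_div, div_le_iff₀ (by linarith : (0:ℝ) < B + 1)]
          nlinarith
        linarith

lemma key {d : ℕ} {ρ : ℝ} (hρ : 0 < ρ) {E : Set (Fin d → ℝ)}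
    {f : (Fin d → ℝ) → (Fin d → ℝ)} {L : ℝ} (hL : 1 ≤ L)
    (hbilip : ∀ x ∈ E, ∀ y ∈ E,
      L⁻¹ * dist x y ≤ dist (f x) (f y) ∧ dist (f x) (f y) ≤ L * dist x y)
    (hsum : Summable fun n => nuN d ρ n E) :
    Summable fun n => nuN d ρ n (f '' E) := by
  rcases E.eq_empty_or_nonempty with hE | ⟨x0, hx0⟩
  · simpa [hE] using hsum
  · set a : ℕ := ⌈L + (L * ‖f x0‖ + ‖x0‖) + 1⌉₊ with haa
    have ha : L + (L * ‖f x0‖ + ‖x0‖) + 1 ≤ Real.exp a := by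
      have h1 : L + (L * ‖f x0‖ + ‖x0‖) + 1 ≤ (a : ℝ) := Nat.le_ceil _
      have h2 : (a : ℝ) + 1 ≤ Real.exp a := Real.add_one_le_exp _
      linarith
    set q : ℝ := Real.exp (-ρ) with hq
    have hq0 : 0 ≤ q := Real.exp_nonneg _
    have hq1 : q < 1 := Real.exp_lt_one_iff.2 (by linarith)
    set b : ℕ → ℝ := fun k => nuN d ρ k E with hb
    have hbnn : ∀ k, 0 ≤ b k := fun k => nuN_nonneg d ρ k E
    set u : ℕ → ℝ := fun m => ∑ k ∈ Finset.range (m + 1), b k * q ^ (m - k) with hu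
    have husum : Summable u := by
      have h := summable_norm_sum_mul_range_of_summable_norm (f := b) (g := fun j => q ^ j)
        (by simpa [Real.norm_eq_abs, abs_of_nonneg, hbnn] using hsum.abs)
        (by
          have : Summable fun j => q ^ j := summable_geometric_of_lt_one hq0 hq1
          simpa [Real.norm_eq_abs, abs_of_nonneg, pow_nonneg hq0] using this.abs)
      exact (h.of_norm)
    have hshift : Summable fun n => u (n + a) := (summable_nat_add_iff a).2 husum
    set C : ℝ := (2 * L + 1) ^ ρ * Real.exp ((a : ℝ) * ρ) with hC
    refine Summable.of_nonneg_of_le (fun n => nuN_nonneg d ρ n _) (fun n => ?_)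
      (hshift.mul_left C)
    calc nuN d ρ n (f '' E)
        ≤ ∑ k ∈ Finset.range (n + a + 1),
          (2 * L + 1) ^ ρ * ((Real.exp k / Real.exp n) ^ ρ * nuN d ρ k E) :=
          cover_transfer' hρ hL hbilip hx0 a ha n
    _ = C * u (n + a) := by
          rw [hu, Finset.mul_sum]
          refine Finset.sum_congr rfl fun k hk => ?_
          have hk' : k ≤ n + a := Nat.lt_succ_iff.1 (Finset.mem_range.1 hk)
          have hid : (Real.exp k / Real.exp n) ^ ρ
              = Real.exp ((a : ℝ) * ρ) * q ^ (n + a - k) := by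
            rw [← Real.exp_sub,
              Real.rpow_def_of_pos (Real.exp_pos _), Real.log_exp,
              hq, ← Real.exp_nat_mul, ← Real.exp_add]
            congr 1
            have : ((n + a - k : ℕ) : ℝ) = (n : ℝ) + a - k := by
              push_cast [Nat.cast_sub hk']
              ring
            rw [this]
            ring
          rw [hid, hC, hb]
          ring

end BTaux


/-- Bi-Lipschitz maps preserve the macroscopic Hausdorff dimension. -/
theorem dimH_image_eq_of_biLipschitz (d : ℕ) (E : Set (Fin d → ℝ))
    (f : (Fin d → ℝ) → (Fin d → ℝ)) (L : ℝ) (hL : 1 ≤ L)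
    (hbilip : ∀ x ∈ E, ∀ y ∈ E,
      L⁻¹ * dist x y ≤ dist (f x) (f y) ∧ dist (f x) (f y) ≤ L * dist x y) :
    DimH d (f '' E) = DimH d E := by
  classical
  have hL0 : (0:ℝ) < L := lt_of_lt_of_le one_pos hL
  have hLinv0 : (0:ℝ) < L⁻¹ := inv_pos.2 hL0
  set g : (Fin d → ℝ) → (Fin d → ℝ) := Function.invFunOn f E with hg
  have hgmem : ∀ y ∈ f '' E, g y ∈ E := by
    rintro y ⟨x, hx, rfl⟩
    exact Function.invFunOn_mem ⟨x, hx, rfl⟩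
  have hgeq : ∀ y ∈ f '' E, f (g y) = y := by
    rintro y ⟨x, hx, rfl⟩
    exact Function.invFunOn_eq ⟨x, hx, rfl⟩
  have hgf : ∀ x ∈ E, g (f x) = x := by
    intro x hx
    have h1 : g (f x) ∈ E := hgmem _ ⟨x, hx, rfl⟩
    have h2 : f (g (f x)) = f x := hgeq _ ⟨x, hx, rfl⟩
    have h3 := (hbilip x hx (g (f x)) h1).1
    rw [h2, dist_self] at h3
    have : dist x (g (f x)) = 0 := le_antisymm (by nlinarith [dist_nonneg (x := x) (y := g (f x))]) dist_nonneg
    exact (dist_eq_zero.1 this).symm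
  have hgimg : g '' (f '' E) = E := by
    ext z
    constructor
    · rintro ⟨y, hy, rfl⟩
      exact hgmem y hy
    · intro hz
      exact ⟨f z, ⟨z, hz, rfl⟩, hgf z hz⟩
  have hbilip_g : ∀ y1 ∈ f '' E, ∀ y2 ∈ f '' E,
      L⁻¹ * dist y1 y2 ≤ dist (g y1) (g y2) ∧ dist (g y1) (g y2) ≤ L * dist y1 y2 := by
    intro y1 hy1 y2 hy2
    have h1 := hbilip (g y1) (hgmem _ hy1) (g y2) (hgmem _ hy2)
    rw [hgeq _ hy1, hgeq _ hy2] at h1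
    constructor
    · have := mul_le_mul_of_nonneg_left h1.2 (le_of_lt hLinv0)
      rwa [← mul_assoc, inv_mul_cancel₀ (ne_of_gt hL0), one_mul] at this
    · have := mul_le_mul_of_nonneg_left h1.1 (le_of_lt hL0)
      rwa [← mul_assoc, mul_inv_cancel₀ (ne_of_gt hL0), one_mul] at this
  have hsets : { ρ : ℝ | 0 < ρ ∧ Summable (fun n => nuN d ρ n (f '' E)) }
      = { ρ : ℝ | 0 < ρ ∧ Summable (fun n => nuN d ρ n E) } := by
    ext ρ
    simp only [Set.mem_setOf_eq]
    constructor
    · rintro ⟨hρ, hs⟩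
      refine ⟨hρ, ?_⟩
      have := BTaux.key hρ hL hbilip_g hs
      rwa [hgimg] at this
    · rintro ⟨hρ, hs⟩
      exact ⟨hρ, BTaux.key hρ hL hbilip hs⟩
  unfold DimH
  rw [hsets]
end

section
/- (Density implies full dimension) Let ν be Lebesgue measure on ℝ^d and define the upper density of a Borel set E ⊆ ℝ^d as Den E := limsup_{t→∞} ν(E ∩ [−t, t]^d)/(2t)^d. If Den E > 0, then Dim_H E = d, where Dim_H is the macroscopic Hausdorff dimension. -/
open MeasureTheory Real Set

lemma uprightBox_eq_pi (d : ℕ) (x : Fin d → ℝ) (r : ℝ) :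
    uprightBox d x r = Set.pi Set.univ (fun i => Set.Ico (x i) (x i + r)) := by
  ext y; simp [uprightBox, Set.mem_pi]

lemma macroBall_eq_pi (d n : ℕ) :
    macroBall d n = Set.pi Set.univ (fun _ => Set.Ico (-(Real.exp n)) (Real.exp n)) := by
  ext y; simp [macroBall, Set.mem_pi]

lemma macroBall_mono {d : ℕ} {m n : ℕ} (h : m ≤ n) : macroBall d m ⊆ macroBall d n := by
  intro y hy i
  obtain ⟨h1, h2⟩ := hy i
  constructor
  · exact le_trans (neg_le_neg (Real.exp_le_exp.2 (by exact_mod_cast h))) h1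
  · exact lt_of_lt_of_le h2 (Real.exp_le_exp.2 (by exact_mod_cast h))

lemma shell_subset_macroBall (d n : ℕ) : shell d n ⊆ macroBall d n := by
  cases n with
  | zero => exact subset_rfl
  | succ n => exact Set.diff_subset

lemma macroBall_subset_union {d : ℕ} (N : ℕ) :
    ∀ m, N ≤ m → macroBall d m ⊆ macroBall d N ∪ ⋃ k ∈ Finset.Ioc N m, shell d k := by
  intro m
  induction m with
  | zero => intro h; simp at h; subst h; simp
  | succ m ih =>
    intro h
    rcases Nat.lt_or_ge N (m+1) with h' | h'
    · have hNm : N ≤ m := Nat.lt_succ_iff.mp h'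
      have : macroBall d (m+1) ⊆ macroBall d m ∪ shell d (m+1) := by
        intro y hy
        by_cases hm : y ∈ macroBall d m
        · exact Or.inl hm
        · exact Or.inr ⟨hy, hm⟩
      refine this.trans ?_
      intro y hy
      rcases hy with hy | hy
      · rcases ih hNm hy with hy' | hy'
        · exact Or.inl hy'
        · refine Or.inr ?_
          simp only [Set.mem_iUnion] at hy' ⊢
          obtain ⟨k, hk, hyk⟩ := hy'
          exact ⟨k, by simp at hk ⊢; omega, hyk⟩
      · refine Or.inr ?_
        simp only [Set.mem_iUnion]
        exact ⟨m+1, by simp; omega, hy⟩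
    · have : N = m + 1 := le_antisymm h h'
      subst this; simp

lemma volume_macroBall (d n : ℕ) :
    volume (macroBall d n) = ENNReal.ofReal ((2 * Real.exp n) ^ d) := by
  rw [macroBall_eq_pi, volume_pi_pi]
  simp only [Real.volume_Ico, Finset.prod_const, Finset.card_univ, Fintype.card_fin]
  have h : Real.exp n - -(Real.exp n) = 2 * Real.exp n := by ring
  rw [h, ← ENNReal.ofReal_pow (by positivity)]



def nuNSet (d : ℕ) (ρ : ℝ) (n : ℕ) (E : Set (Fin d → ℝ)) : Set ℝ :=
  { s : ℝ | ∃ (m : ℕ) (c : Fin m → Fin d → ℝ) (r : Fin m → ℝ),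
    (∀ i, 1 ≤ r i) ∧ (E ∩ shell d n ⊆ ⋃ i, uprightBox d (c i) (r i)) ∧
    s = ∑ i, (r i / Real.exp n) ^ ρ }

lemma nuN_eq (d : ℕ) (ρ : ℝ) (n : ℕ) (E : Set (Fin d → ℝ)) :
    nuN d ρ n E = sInf (nuNSet d ρ n E) := rfl

lemma nuNSet_nonneg {d : ℕ} {ρ : ℝ} {n : ℕ} {E : Set (Fin d → ℝ)} {s : ℝ}
    (hs : s ∈ nuNSet d ρ n E) : 0 ≤ s := by
  obtain ⟨m, c, r, hr, -, rfl⟩ := hs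
  exact Finset.sum_nonneg fun i _ =>
    Real.rpow_nonneg (div_nonneg (le_trans zero_le_one (hr i)) (Real.exp_pos _).le) _

lemma nuNSet_nonempty (d : ℕ) (ρ : ℝ) (n : ℕ) (E : Set (Fin d → ℝ)) :
    (nuNSet d ρ n E).Nonempty := by
  refine ⟨_, 1, (fun _ _ => -(Real.exp n)), (fun _ => 2 * Real.exp n), fun i => ?_, ?_, rfl⟩
  · show (1:ℝ) ≤ 2 * Real.exp n
    have := Real.one_le_exp (by positivity : (0:ℝ) ≤ (n:ℝ))
    linarith
  · intro y hy
    have h2 := shell_subset_macroBall d n hy.2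
    refine Set.mem_iUnion.2 ⟨0, fun i => ?_⟩
    obtain ⟨ha, hb⟩ := h2 i
    show y i ∈ Set.Ico (-(Real.exp n)) (-(Real.exp n) + 2 * Real.exp n)
    exact ⟨ha, by linarith⟩

lemma nuN_nonneg (d : ℕ) (ρ : ℝ) (n : ℕ) (E : Set (Fin d → ℝ)) : 0 ≤ nuN d ρ n E :=
  le_csInf (nuNSet_nonempty d ρ n E) fun _ hs => nuNSet_nonneg hs

lemma nuN_le {d : ℕ} {ρ : ℝ} {n : ℕ} {E : Set (Fin d → ℝ)} {s : ℝ}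
    (hs : s ∈ nuNSet d ρ n E) : nuN d ρ n E ≤ s :=
  csInf_le ⟨0, fun _ hx => nuNSet_nonneg hx⟩ hs

lemma nuN_le_geom (d : ℕ) {ρ : ℝ} (hρ : 0 ≤ ρ) (n : ℕ) (E : Set (Fin d → ℝ)) :
    nuN d ρ n E ≤ 4 ^ d * Real.exp ((d : ℝ) - ρ) ^ n := by
  set K : ℕ := ⌈Real.exp n⌉₊ with hK
  have hexp1 : (1:ℝ) ≤ Real.exp n := Real.one_le_exp (by positivity)
  have hKe : Real.exp n ≤ (K : ℝ) := Nat.le_ceil _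
  have hK1 : 1 ≤ K := by
    rw [hK, Nat.one_le_ceil_iff]; linarith
  set M : ℕ := 2 * K with hM
  have hcard : Fintype.card (Fin d → Fin M) = M ^ d := by
    simp [Fintype.card_fun]
  let e := Fintype.equivFinOfCardEq hcard
  have hmem : (∑ _j : Fin (M ^ d), ((1:ℝ) / Real.exp n) ^ ρ) ∈ nuNSet d ρ n E := by
    refine ⟨M ^ d, fun j i => ((e.symm j i : ℕ) : ℝ) - K, fun _ => 1,
      fun _ => le_refl 1, ?_, rfl⟩
    intro y hy
    have h2 := shell_subset_macroBall d n hy.2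
    have hnn : ∀ i, (0:ℝ) ≤ y i + K := by
      intro i; have := (h2 i).1; linarith
    have hlt : ∀ i, ⌊y i + (K:ℝ)⌋₊ < M := by
      intro i
      have hub : y i + (K:ℝ) < 2 * K := by
        have := (h2 i).2; linarith
      refine (Nat.floor_lt (hnn i)).2 ?_
      have hMc : ((M:ℕ):ℝ) = 2 * (K:ℝ) := by rw [hM]; push_cast; ring
      linarith
    refine Set.mem_iUnion.2 ⟨e (fun i => ⟨⌊y i + (K:ℝ)⌋₊, hlt i⟩), fun i => ?_⟩
    show y i ∈ Set.Ico _ _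
    simp only [Equiv.symm_apply_apply, Fin.val_mk]
    refine ⟨?_, ?_⟩
    · have := Nat.floor_le (hnn i)
      linarith
    · have := Nat.lt_floor_add_one (y i + (K:ℝ))
      linarith
  refine le_trans (nuN_le hmem) ?_
  rw [Finset.sum_const, Finset.card_univ, Fintype.card_fin, nsmul_eq_mul]
  have hMle : (M : ℝ) ≤ 4 * Real.exp n := by
    have := Nat.ceil_lt_add_one (le_trans zero_le_one hexp1 : (0:ℝ) ≤ Real.exp n)
    push_cast [hM]
    linarith
  have hone : ((1:ℝ) / Real.exp n) ^ ρ = Real.exp (-(n:ℝ) * ρ) := by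
    rw [one_div, ← Real.exp_neg, ← Real.exp_mul]
  have hMpow : ((M ^ d : ℕ) : ℝ) ≤ (4 * Real.exp n) ^ d := by
    push_cast
    exact pow_le_pow_left₀ (by positivity) hMle d
  calc ((M ^ d : ℕ) : ℝ) * ((1:ℝ) / Real.exp n) ^ ρ
      ≤ (4 * Real.exp n) ^ d * ((1:ℝ) / Real.exp n) ^ ρ := by
        apply mul_le_mul_of_nonneg_right hMpow
        exact Real.rpow_nonneg (by positivity) _
    _ = 4 ^ d * Real.exp ((d : ℝ) - ρ) ^ n := by
        rw [hone, mul_pow, ← Real.exp_nat_mul, ← Real.exp_nat_mul, mul_assoc,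
          ← Real.exp_add]
        congr 2
        ring

lemma summable_nuN {d : ℕ} {ρ : ℝ} (hρ : (d:ℝ) < ρ) (E : Set (Fin d → ℝ)) :
    Summable (fun n => nuN d ρ n E) := by
  have h0 : (0:ℝ) ≤ Real.exp ((d:ℝ) - ρ) := (Real.exp_pos _).le
  have h1 : Real.exp ((d:ℝ) - ρ) < 1 := by
    rw [Real.exp_lt_one_iff]; linarith
  exact Summable.of_nonneg_of_le (fun n => nuN_nonneg d ρ n E)
    (fun n => nuN_le_geom d (le_of_lt (lt_of_le_of_lt (Nat.cast_nonneg d) hρ)) n E)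
    ((summable_geometric_of_lt_one h0 h1).mul_left (4 ^ d))

lemma DimH_le (d : ℕ) (E : Set (Fin d → ℝ)) : DimH d E ≤ d := by
  refine le_of_forall_pos_le_add ?_
  intro ε hε
  refine csInf_le_of_le ⟨0, fun ρ hρ => hρ.1.le⟩
    (show ((d:ℝ) + ε) ∈ _ from ⟨by positivity, summable_nuN (by linarith) E⟩) le_rfl

lemma DimH_nonneg (d : ℕ) (E : Set (Fin d → ℝ)) : 0 ≤ DimH d E :=
  le_csInf ⟨(d:ℝ) + 1, ⟨by positivity, summable_nuN (by linarith) E⟩⟩ fun _ hρ => hρ.1.le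

lemma min_pow_le {b r ρ : ℝ} {d : ℕ} (hb : 1 ≤ b) (hr : 1 ≤ r) (hρ0 : 0 < ρ) (hρd : ρ ≤ d) :
    min r (2 * b) ^ d ≤ 2 ^ d * b ^ d * (r / b) ^ ρ := by
  set m := min r (2 * b) with hm
  have hb0 : 0 < b := lt_of_lt_of_le one_pos hb
  have hm0 : 0 < m := lt_min (lt_of_lt_of_le one_pos hr) (by linarith)
  have hmr : m ≤ r := min_le_left _ _
  have hm2b : m ≤ 2 * b := min_le_right _ _
  have h2b0 : (0:ℝ) < 2 * b := by linarith
  have hx0 : 0 < m / (2 * b) := by positivity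
  have hx1 : m / (2 * b) ≤ 1 := (div_le_one h2b0).2 hm2b
  have h1 : m ^ d = (2 * b) ^ d * (m / (2 * b)) ^ (d:ℝ) := by
    rw [Real.rpow_natCast, div_pow]
    field_simp
  have h2 : (m / (2 * b)) ^ (d:ℝ) ≤ (m / (2 * b)) ^ ρ :=
    Real.rpow_le_rpow_of_exponent_ge hx0 hx1 hρd
  have h3 : (m / (2 * b)) ^ ρ ≤ (r / b) ^ ρ := by
    apply Real.rpow_le_rpow hx0.le _ hρ0.le
    rw [div_le_div_iff₀ h2b0 hb0]
    nlinarith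
  calc m ^ d = (2 * b) ^ d * (m / (2 * b)) ^ (d:ℝ) := h1
    _ ≤ (2 * b) ^ d * (r / b) ^ ρ := by
        apply mul_le_mul_of_nonneg_left (le_trans h2 h3) (by positivity)
    _ = 2 ^ d * b ^ d * (r / b) ^ ρ := by rw [mul_pow]

lemma volume_box_inter_macroBall {d : ℕ} (n : ℕ) (x : Fin d → ℝ) {r : ℝ} (hr : 1 ≤ r) :
    volume (uprightBox d x r ∩ macroBall d n) ≤
      ENNReal.ofReal (min r (2 * Real.exp n) ^ d) := by
  set b := Real.exp n with hb
  have hb1 : (1:ℝ) ≤ b := Real.one_le_exp (by positivity)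
  rw [uprightBox_eq_pi, macroBall_eq_pi, ← Set.pi_inter_distrib, volume_pi_pi]
  have hle : ∀ i : Fin d,
      volume (Set.Ico (x i) (x i + r) ∩ Set.Ico (-b) b) ≤
        ENNReal.ofReal (min r (2 * b)) := by
    intro i
    rw [Set.Ico_inter_Ico, Real.volume_Ico]
    apply ENNReal.ofReal_le_ofReal
    rcases le_total r (2 * b) with h | h
    · rw [min_eq_left h]
      calc min (x i + r) b - max (x i) (-b) ≤ (x i + r) - x i := by
            apply sub_le_sub (min_le_left _ _) (le_max_left _ _)
        _ = r := by ring
    · rw [min_eq_right h]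
      calc min (x i + r) b - max (x i) (-b) ≤ b - (-b) := by
            apply sub_le_sub (min_le_right _ _) (le_max_right _ _)
        _ = 2 * b := by ring
  calc (∏ i : Fin d, volume (Set.Ico (x i) (x i + r) ∩ Set.Ico (-b) b))
      ≤ ∏ _i : Fin d, ENNReal.ofReal (min r (2 * b)) :=
        Finset.prod_le_prod' fun i _ => hle i
    _ = ENNReal.ofReal (min r (2 * b) ^ d) := by
        rw [Finset.prod_const, Finset.card_univ, Fintype.card_fin,
          ENNReal.ofReal_pow (le_trans zero_le_one (le_min hr (by linarith)))]

lemma volume_inter_shell_le {d : ℕ} {ρ : ℝ} (hρ0 : 0 < ρ) (hρd : ρ ≤ d) (n : ℕ)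
    (E : Set (Fin d → ℝ)) :
    (volume (E ∩ shell d n)).toReal ≤ 2 ^ d * Real.exp n ^ d * nuN d ρ n E := by
  set b := Real.exp n with hb
  have hb1 : (1:ℝ) ≤ b := Real.one_le_exp (by positivity)
  have hC : (0:ℝ) < 2 ^ d * b ^ d := by positivity
  have key : ∀ s ∈ nuNSet d ρ n E,
      (volume (E ∩ shell d n)).toReal ≤ 2 ^ d * b ^ d * s := by
    rintro s ⟨m, c, r, hr, hcov, rfl⟩
    have hsub : E ∩ shell d n ⊆ ⋃ i, (uprightBox d (c i) (r i) ∩ macroBall d n) := by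
      intro y hy
      have h1 := hcov hy
      have h2 := shell_subset_macroBall d n hy.2
      obtain ⟨i, hi⟩ := Set.mem_iUnion.1 h1
      exact Set.mem_iUnion.2 ⟨i, hi, h2⟩
    have hv : volume (E ∩ shell d n) ≤
        ENNReal.ofReal (∑ i, min (r i) (2 * b) ^ d) := by
      calc volume (E ∩ shell d n)
          ≤ ∑ i, volume (uprightBox d (c i) (r i) ∩ macroBall d n) :=
            le_trans (measure_mono hsub) (measure_iUnion_fintype_le _ _)
        _ ≤ ∑ i, ENNReal.ofReal (min (r i) (2 * b) ^ d) :=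
            Finset.sum_le_sum fun i _ => volume_box_inter_macroBall n (c i) (hr i)
        _ = ENNReal.ofReal (∑ i, min (r i) (2 * b) ^ d) :=
            (ENNReal.ofReal_sum_of_nonneg fun i _ =>
              pow_nonneg (le_trans zero_le_one (le_min (hr i) (by linarith))) _).symm
    have hsum : (∑ i, min (r i) (2 * b) ^ d) ≤ 2 ^ d * b ^ d * ∑ i, (r i / b) ^ ρ := by
      rw [Finset.mul_sum]
      exact Finset.sum_le_sum fun i _ => min_pow_le hb1 (hr i) hρ0 hρd
    have := ENNReal.toReal_le_of_le_ofReal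
      (Finset.sum_nonneg fun i _ =>
        pow_nonneg (le_trans zero_le_one (le_min (hr i) (by linarith))) _) hv
    refine le_trans this (le_trans hsum ?_)
    exact le_rfl
  have hlow : (volume (E ∩ shell d n)).toReal / (2 ^ d * b ^ d) ≤ nuN d ρ n E := by
    refine le_csInf (nuNSet_nonempty d ρ n E) fun s hs => ?_
    rw [div_le_iff₀ hC]
    rw [mul_comm]
    exact key s hs
  calc (volume (E ∩ shell d n)).toReal
      = (volume (E ∩ shell d n)).toReal / (2 ^ d * b ^ d) * (2 ^ d * b ^ d) := by
        field_simp
    _ ≤ nuN d ρ n E * (2 ^ d * b ^ d) := by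
        apply mul_le_mul_of_nonneg_right hlow hC.le
    _ = 2 ^ d * b ^ d * nuN d ρ n E := by ring

lemma density_tendsto_zero {d : ℕ} (hd : 1 ≤ d) {ρ : ℝ} (hρ0 : 0 < ρ) (hρd : ρ < d)
    {E : Set (Fin d → ℝ)} (hsum : Summable (fun n => nuN d ρ n E)) :
    Filter.Tendsto (fun t : ℝ =>
      (volume (E ∩ {y : Fin d → ℝ | ∀ i, |y i| ≤ t})).toReal / (2 * t) ^ d)
      Filter.atTop (nhds 0) := by
  rw [tendsto_order]
  constructor
  · intro b hb
    filter_upwards [Filter.eventually_gt_atTop (0:ℝ)] with t ht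
    have h0 : (0:ℝ) ≤ (volume (E ∩ {y : Fin d → ℝ | ∀ i, |y i| ≤ t})).toReal / (2 * t) ^ d :=
      div_nonneg ENNReal.toReal_nonneg (by positivity)
    linarith
  · intro δ hδ
    set X : ℝ := Real.exp (d:ℝ) with hXdef
    have hX1 : 1 < X := Real.one_lt_exp_iff.2 (by exact_mod_cast Nat.pos_of_ne_zero (by omega))
    have hX0 : 0 < X := lt_trans one_pos hX1
    set ε : ℝ := δ * (X - 1) / (4 * X ^ 2 * 2 ^ d) with hεdef
    have hε0 : 0 < ε := by
      apply div_pos (by nlinarith) (by positivity)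
    -- choose N with nuN < ε for k ≥ N
    obtain ⟨N, hN⟩ := Filter.eventually_atTop.1
      ((hsum.tendsto_atTop_zero).eventually_lt_const hε0)
    -- a_k bound for k ≥ N
    have hak : ∀ k, N ≤ k → (volume (E ∩ shell d k)).toReal ≤ 2 ^ d * X ^ k * ε := by
      intro k hk
      refine le_trans (volume_inter_shell_le hρ0 hρd.le k E) ?_
      have hXk : Real.exp (k:ℝ) ^ d = X ^ k := by
        rw [hXdef, ← Real.exp_nat_mul, ← Real.exp_nat_mul, mul_comm]
      rw [hXk]
      have : nuN d ρ k E ≤ ε := (hN k hk).le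
      exact mul_le_mul_of_nonneg_left this (by positivity)
    -- first term tendsto 0
    have hfirst : Filter.Tendsto (fun t : ℝ => (2 * Real.exp (N:ℝ)) ^ d / (2 * t) ^ d)
        Filter.atTop (nhds 0) := by
      apply Filter.Tendsto.div_atTop tendsto_const_nhds
      exact (Filter.tendsto_pow_atTop (by omega : d ≠ 0)).comp
        (Filter.tendsto_id.const_mul_atTop two_pos)
    filter_upwards [hfirst.eventually_lt_const (half_pos hδ),
      Filter.eventually_ge_atTop (1:ℝ),
      Filter.eventually_ge_atTop (Real.exp (N:ℝ))] with t htfirst ht1 htN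
    set n : ℕ := ⌊Real.log t⌋₊ with hn
    have ht0 : (0:ℝ) < t := lt_of_lt_of_le one_pos ht1
    have hlog0 : 0 ≤ Real.log t := Real.log_nonneg ht1
    have hent : Real.exp (n:ℝ) ≤ t := by
      rw [← Real.exp_log ht0]
      exact Real.exp_le_exp.2 (Nat.floor_le hlog0)
    have htlt : t < Real.exp ((n:ℝ) + 1) := by
      rw [← Real.exp_log ht0]
      exact Real.exp_lt_exp.2 (by exact_mod_cast Nat.lt_floor_add_one (Real.log t))
    have hNn : N ≤ n := by
      apply Nat.le_floor
      rw [Real.le_log_iff_exp_le ht0]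
      exact htN
    -- cube ⊆ macroBall (n+1)
    have hcube : {y : Fin d → ℝ | ∀ i, |y i| ≤ t} ⊆ macroBall d (n+1) := by
      intro y hy i
      have := hy i
      have habs := abs_le.1 this
      have hcast : ((n+1 : ℕ) : ℝ) = (n:ℝ) + 1 := by push_cast; ring
      constructor
      · rw [hcast]; linarith [habs.1]
      · rw [hcast]; linarith [habs.2]
    -- measure bound
    have hsub2 : E ∩ macroBall d (n+1) ⊆
        macroBall d N ∪ ⋃ k ∈ Finset.Ioc N (n+1), E ∩ shell d k := by
      intro y hy
      rcases macroBall_subset_union N (n+1) (by omega) hy.2 with h | h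
      · exact Or.inl h
      · obtain ⟨k, hk, hyk⟩ := Set.mem_iUnion₂.1 h
        exact Or.inr (Set.mem_biUnion hk ⟨hy.1, hyk⟩)
    have hmeas : volume (E ∩ {y : Fin d → ℝ | ∀ i, |y i| ≤ t}) ≤
        volume (macroBall d N) + ∑ k ∈ Finset.Ioc N (n+1), volume (E ∩ shell d k) := by
      calc volume (E ∩ {y : Fin d → ℝ | ∀ i, |y i| ≤ t})
          ≤ volume (macroBall d N ∪ ⋃ k ∈ Finset.Ioc N (n+1), E ∩ shell d k) :=
            measure_mono (le_trans (Set.inter_subset_inter_right E hcube) hsub2)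
        _ ≤ volume (macroBall d N) + volume (⋃ k ∈ Finset.Ioc N (n+1), E ∩ shell d k) :=
            measure_union_le _ _
        _ ≤ volume (macroBall d N) + ∑ k ∈ Finset.Ioc N (n+1), volume (E ∩ shell d k) := by
            gcongr
            exact measure_biUnion_finset_le _ _
    -- convert to real bound B
    have hshellfin : ∀ k, volume (E ∩ shell d k) ≠ ⊤ := by
      intro k
      apply ne_top_of_le_ne_top _ (measure_mono ((Set.inter_subset_right).trans
        (shell_subset_macroBall d k)))
      rw [volume_macroBall]
      exact ENNReal.ofReal_ne_top
    have hmeas2 : volume (E ∩ {y : Fin d → ℝ | ∀ i, |y i| ≤ t}) ≤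
        ENNReal.ofReal ((2 * Real.exp (N:ℝ)) ^ d +
          ∑ k ∈ Finset.Ioc N (n+1), 2 ^ d * X ^ k * ε) := by
      refine le_trans hmeas ?_
      rw [ENNReal.ofReal_add (by positivity)
        (Finset.sum_nonneg fun k _ => by positivity),
        ENNReal.ofReal_sum_of_nonneg (fun k _ => by positivity)]
      refine add_le_add (le_of_eq (volume_macroBall d N)) (Finset.sum_le_sum fun k hk => ?_)
      rw [ENNReal.le_ofReal_iff_toReal_le (hshellfin k) (by positivity)]
      exact hak k (by simp at hk; omega)
    set V : ℝ := (volume (E ∩ {y : Fin d → ℝ | ∀ i, |y i| ≤ t})).toReal with hV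
    have hVB : V ≤ (2 * Real.exp (N:ℝ)) ^ d + 2 ^ d * ε * X ^ (n+2) / (X - 1) := by
      refine le_trans (ENNReal.toReal_le_of_le_ofReal
        (by positivity) hmeas2) ?_
      have hgeom : ∑ k ∈ Finset.Ioc N (n+1), 2 ^ d * X ^ k * ε ≤
          2 ^ d * ε * X ^ (n+2) / (X - 1) := by
        have h1 : ∑ k ∈ Finset.Ioc N (n+1), 2 ^ d * X ^ k * ε =
            2 ^ d * ε * ∑ k ∈ Finset.Ioc N (n+1), X ^ k := by
          rw [Finset.mul_sum]; congr 1; ext k; ring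
        rw [h1]
        have h2 : ∑ k ∈ Finset.Ioc N (n+1), X ^ k ≤ ∑ k ∈ Finset.range (n+2), X ^ k := by
          apply Finset.sum_le_sum_of_subset_of_nonneg
          · intro k hk; simp at hk ⊢; omega
          · intro k _ _; positivity
        have h3 : ∑ k ∈ Finset.range (n+2), X ^ k = (X ^ (n+2) - 1) / (X - 1) := by
          rw [geom_sum_eq (ne_of_gt hX1)]
        have h4 : (X ^ (n+2) - 1) / (X - 1) ≤ X ^ (n+2) / (X - 1) := by
          apply div_le_div_of_nonneg_right ?_ (by linarith)
          linarith
        calc 2 ^ d * ε * ∑ k ∈ Finset.Ioc N (n+1), X ^ k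
            ≤ 2 ^ d * ε * ((X ^ (n+2) - 1) / (X - 1)) := by
              rw [← h3]; apply mul_le_mul_of_nonneg_left h2 (by positivity)
          _ ≤ 2 ^ d * ε * (X ^ (n+2) / (X - 1)) := by
              apply mul_le_mul_of_nonneg_left h4 (by positivity)
          _ = 2 ^ d * ε * X ^ (n+2) / (X - 1) := by ring
      linarith
    -- now bound the ratio
    have hpow : (2:ℝ) ^ d * X ^ n ≤ (2 * t) ^ d := by
      have h1 : Real.exp (n:ℝ) ^ d = X ^ n := by
        rw [hXdef, ← Real.exp_nat_mul, ← Real.exp_nat_mul, mul_comm]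
      calc (2:ℝ) ^ d * X ^ n = (2 * Real.exp (n:ℝ)) ^ d := by rw [mul_pow, h1]
        _ ≤ (2 * t) ^ d := by
            apply pow_le_pow_left₀ (by positivity)
            linarith
    have h2t0 : (0:ℝ) < (2 * t) ^ d := by positivity
    have hXn0 : (0:ℝ) < 2 ^ d * X ^ n := by positivity
    have hsecond : 2 ^ d * ε * X ^ (n+2) / (X - 1) / (2 * t) ^ d ≤ δ / 4 := by
      have hnum : (0:ℝ) ≤ 2 ^ d * ε * X ^ (n+2) / (X - 1) :=
        div_nonneg (by positivity) (by linarith)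
      have hle : 2 ^ d * ε * X ^ (n+2) / (X - 1) / (2 * t) ^ d ≤
          2 ^ d * ε * X ^ (n+2) / (X - 1) / (2 ^ d * X ^ n) := by
        apply div_le_div_of_nonneg_left hnum hXn0 hpow
      have hX1' : X - 1 ≠ 0 := by linarith
      have h2d' : ((2:ℝ) ^ d) ≠ 0 := by positivity
      have hXn' : (X:ℝ) ^ n ≠ 0 := by positivity
      have hkey : 2 ^ d * ε * X ^ (n+2) / (X - 1) / (2 ^ d * X ^ n) = ε * X ^ 2 / (X - 1) := by
        have : (X:ℝ) ^ (n+2) = X ^ n * X ^ 2 := by ring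
        rw [this]
        field_simp
      have hval : ε * X ^ 2 / (X - 1) = δ / (4 * 2 ^ d) := by
        rw [hεdef]
        have hX2 : (X:ℝ) ^ 2 ≠ 0 := by positivity
        field_simp
      have hfin : δ / (4 * 2 ^ d) ≤ δ / 4 := by
        apply div_le_div_of_nonneg_left hδ.le (by norm_num)
        have h1 : (1:ℝ) ≤ 2 ^ d := one_le_pow₀ (by norm_num)
        linarith
      rw [hkey, hval] at hle
      exact le_trans hle hfin
    have hVnonneg : 0 ≤ V := ENNReal.toReal_nonneg
    calc V / (2 * t) ^ d
        ≤ ((2 * Real.exp (N:ℝ)) ^ d + 2 ^ d * ε * X ^ (n+2) / (X - 1)) / (2 * t) ^ d := by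
          exact (div_le_div_iff_of_pos_right h2t0).2 hVB
      _ = (2 * Real.exp (N:ℝ)) ^ d / (2 * t) ^ d +
          2 ^ d * ε * X ^ (n+2) / (X - 1) / (2 * t) ^ d := by ring
      _ < δ / 2 + δ / 4 := by
          apply add_lt_add_of_lt_of_le htfirst hsecond
      _ < δ := by linarith


/-- If a Borel set E ⊆ ℝ^d has strictly positive upper density with respect to
Lebesgue measure, then its macroscopic Hausdorff dimension is d. -/
theorem dimH_of_pos_density (d : ℕ) (E : Set (Fin d → ℝ)) (hE : MeasurableSet E)
    (hden : 0 < Filter.limsup (fun t : ℝ =>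
        (volume (E ∩ {y : Fin d → ℝ | ∀ i, |y i| ≤ t})).toReal / (2 * t) ^ d)
        Filter.atTop) :
    DimH d E = d := by
  refine le_antisymm (DimH_le d E) ?_
  rcases Nat.eq_zero_or_pos d with hd | hd
  · subst hd
    exact_mod_cast DimH_nonneg 0 E
  · -- lower bound: every ρ in the defining set satisfies d ≤ ρ
    refine le_csInf ⟨(d:ℝ) + 1, ⟨by positivity, summable_nuN (by linarith) E⟩⟩ ?_
    rintro ρ ⟨hρ0, hρsum⟩
    by_contra hlt
    push_neg at hlt
    have htend := density_tendsto_zero hd hρ0 hlt hρsum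
    rw [htend.limsup_eq] at hden
    exact lt_irrefl 0 hden
end
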